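/- arXiv:math/0107112 — 2 statements merged into one kernel-verified Lean document; each statement's English description precedes it below -/
import Mathlib

section
/- Let A be a unital *-algebra over C and ω a positive linear functional with Gel'fand ideal J_ω. Then the quotient H_ω = A/J_ω carries a well-defined inner product ⟨ψ_B, ψ_C⟩ = ω(B*C) making it a pre-Hilbert space over C (positive-definite Hermitian C-sesquilinear), and left multiplication π_ω(a)ψ_b = ψ_{ab} defines a *-representation of A on H_ω, i.e., each π_ω(a) is adjointable with π_ω(a)* = π_ω(a*), and π_ω is an algebra homomorphism. -/
/-- An ordered ring in the sense of the paper. -/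
structure PosCone (R : Type) [CommRing R] (P : Set R) : Prop where
  trichotomy : ∀ a : R, a ∈ P ∨ a = 0 ∨ -a ∈ P
  zero_not_mem : (0 : R) ∉ P
  not_neg_mem : ∀ a : R, a ∈ P → -a ∉ P
  add_mem : ∀ a b : R, a ∈ P → b ∈ P → a + b ∈ P
  mul_mem : ∀ a b : R, a ∈ P → b ∈ P → a * b ∈ P

/-- The ring `C = R[i] = R(i)` obtained from `R` by adjoining a square root
of `-1`: elements are formal combinations `a + i b`. -/
@[ext] structure Cx (R : Type) : Type where
  re : R
  im : R

namespace Cx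
variable {R : Type} [CommRing R]

instance : Zero (Cx R) := ⟨⟨0, 0⟩⟩
instance : One (Cx R) := ⟨⟨1, 0⟩⟩
instance : Add (Cx R) := ⟨fun z w => ⟨z.re + w.re, z.im + w.im⟩⟩
instance : Neg (Cx R) := ⟨fun z => ⟨-z.re, -z.im⟩⟩
instance : Mul (Cx R) := ⟨fun z w => ⟨z.re * w.re - z.im * w.im, z.re * w.im + z.im * w.re⟩⟩

@[simp] theorem zero_re : (0 : Cx R).re = 0 := rfl
@[simp] theorem zero_im : (0 : Cx R).im = 0 := rfl
@[simp] theorem one_re : (1 : Cx R).re = 1 := rfl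
@[simp] theorem one_im : (1 : Cx R).im = 0 := rfl
@[simp] theorem add_re (z w : Cx R) : (z + w).re = z.re + w.re := rfl
@[simp] theorem add_im (z w : Cx R) : (z + w).im = z.im + w.im := rfl
@[simp] theorem neg_re (z : Cx R) : (-z).re = -z.re := rfl
@[simp] theorem neg_im (z : Cx R) : (-z).im = -z.im := rfl
@[simp] theorem mul_re (z w : Cx R) : (z * w).re = z.re * w.re - z.im * w.im := rfl
@[simp] theorem mul_im (z w : Cx R) : (z * w).im = z.re * w.im + z.im * w.re := rfl

instance : CommRing (Cx R) where
  add_assoc a b c := by ext <;> simp <;> ring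
  zero_add a := by ext <;> simp
  add_zero a := by ext <;> simp
  add_comm a b := by ext <;> simp <;> ring
  left_distrib a b c := by ext <;> simp <;> ring
  right_distrib a b c := by ext <;> simp <;> ring
  zero_mul a := by ext <;> simp
  mul_zero a := by ext <;> simp
  mul_assoc a b c := by ext <;> simp <;> ring
  one_mul a := by ext <;> simp
  mul_one a := by ext <;> simp
  neg_add_cancel a := by ext <;> simp
  mul_comm a b := by ext <;> simp <;> ring
  nsmul := nsmulRec
  zsmul := zsmulRec

/-- Complex conjugation `a + ib ↦ a - ib` on `C = R[i]`. -/
def conj (z : Cx R) : Cx R := ⟨z.re, -z.im⟩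

/-- The imaginary unit `i` of `C = R[i]`. -/
def I : Cx R := ⟨0, 1⟩

end Cx

/-- The positive elements of `C = R[i]`: the elements of `P ⊆ R ⊆ C`. -/
def CxPos {R : Type} [CommRing R] (P : Set R) : Set (Cx R) :=
  {z | z.im = 0 ∧ z.re ∈ P}

/-- The nonnegative elements of `C = R[i]`: elements of `P ∪ {0} ⊆ R ⊆ C`. -/
def CxNonneg {R : Type} [CommRing R] (P : Set R) : Set (Cx R) :=
  {z | z.im = 0 ∧ (z.re = 0 ∨ z.re ∈ P)}

/-- A pre-Hilbert space over `K` (with conjugation `conj` and positivity set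
`Pos`): a `K`-module with a Hermitian, positive-definite inner product which
is `K`-linear in the second argument. -/
structure PreHilbert (K : Type) [CommRing K] (conj : K → K) (Pos : Set K)
    (H : Type) [AddCommGroup H] [Module K H] : Type where
  inner : H → H → K
  inner_add_right : ∀ φ ψ χ : H, inner φ (ψ + χ) = inner φ ψ + inner φ χ
  inner_smul_right : ∀ (z : K) (φ ψ : H), inner φ (z • ψ) = z * inner φ ψ
  inner_conj : ∀ φ ψ : H, inner φ ψ = conj (inner ψ φ)
  inner_pos : ∀ φ : H, φ ≠ 0 → inner φ φ ∈ Pos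

/-- A `*`-algebra over `K`: an associative unital `K`-algebra together with an
anti-linear involutive anti-automorphism `star`. -/
structure StarAlgebra (K : Type) [CommRing K] (conj : K → K)
    (A : Type) [Ring A] [Algebra K A] : Type where
  star : A → A
  star_add : ∀ a b : A, star (a + b) = star a + star b
  star_mul : ∀ a b : A, star (a * b) = star b * star a
  star_star : ∀ a : A, star (star a) = a
  star_smul : ∀ (z : K) (a : A), star (z • a) = conj z • star a

/-- A `K`-linear functional `ω` on a `*`-algebra is positive if
`ω(a*a) ≥ 0` for all `a`. -/
def StarAlgebra.IsPositive {K : Type} [CommRing K] {conj : K → K}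
    {A : Type} [Ring A] [Algebra K A] (sa : StarAlgebra K conj A)
    (Nonneg : Set K) (ω : A →ₗ[K] K) : Prop :=
  ∀ a : A, ω (sa.star a * a) ∈ Nonneg

section GNSAux

variable {R : Type} [CommRing R] {P : Set R}

namespace Cx

@[simp] theorem conj_re (z : Cx R) : (Cx.conj z).re = z.re := rfl
@[simp] theorem conj_im (z : Cx R) : (Cx.conj z).im = -z.im := rfl
@[simp] theorem I_re : (Cx.I : Cx R).re = 0 := rfl
@[simp] theorem I_im : (Cx.I : Cx R).im = 1 := rfl
@[simp] theorem conj_one : Cx.conj (1 : Cx R) = 1 := by ext <;> simp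
@[simp] theorem conj_zero : Cx.conj (0 : Cx R) = 0 := by ext <;> simp
theorem conj_neg (z : Cx R) : Cx.conj (-z) = -Cx.conj z := by ext <;> simp
theorem conj_I_mul_I : Cx.conj Cx.I * Cx.I = (1 : Cx R) := by
  ext <;> simp [Cx.I, Cx.conj]

end Cx

theorem PosCone.sq_mem (hP : PosCone R P) {a : R} (ha : a ≠ 0) : a * a ∈ P := by
  rcases hP.trichotomy a with h | h | h
  · exact hP.mul_mem _ _ h h
  · exact absurd h ha
  · simpa using hP.mul_mem _ _ h h

theorem normSq_re_mem (hP : PosCone R P) {z : Cx R} (hz : z ≠ 0) :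
    (z * Cx.conj z).re ∈ P := by
  have he : (z * Cx.conj z).re = z.re * z.re + z.im * z.im := by
    simp only [Cx.mul_re, Cx.conj_re, Cx.conj_im]; ring
  rw [he]
  by_cases hre : z.re = 0
  · have him : z.im ≠ 0 := fun h => hz (Cx.ext hre h)
    simpa [hre] using hP.sq_mem him
  · by_cases him : z.im = 0
    · simpa [him] using hP.sq_mem hre
    · exact hP.add_mem _ _ (hP.sq_mem hre) (hP.sq_mem him)

theorem normSq_im (z : Cx R) : (z * Cx.conj z).im = 0 := by
  simp only [Cx.mul_im, Cx.conj_re, Cx.conj_im]; ring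

theorem nonneg_mul (hP : PosCone R P) {z w : Cx R}
    (hz : z ∈ CxNonneg P) (hw : w ∈ CxNonneg P) : z * w ∈ CxNonneg P := by
  obtain ⟨hzi, hzr⟩ := hz
  obtain ⟨hwi, hwr⟩ := hw
  refine ⟨by simp [hzi, hwi], ?_⟩
  rcases hzr with h | h
  · left; simp [h, hzi]
  · rcases hwr with h' | h'
    · left; simp [h', hwi]
    · right; simpa [hzi, hwi] using hP.mul_mem _ _ h h'

theorem nonneg_antisymm (hP : PosCone R P) {z : Cx R}
    (h1 : z ∈ CxNonneg P) (h2 : -z ∈ CxNonneg P) : z = 0 := by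
  obtain ⟨hzi, hzr⟩ := h1
  obtain ⟨-, hzr'⟩ := h2
  refine Cx.ext ?_ hzi
  rcases hzr with h | h
  · exact h
  · rcases hzr' with h' | h'
    · simpa using h'
    · exact absurd (by simpa using h') (hP.not_neg_mem _ h)

variable {A : Type} [Ring A] [Algebra (Cx R) A]
variable (sa : StarAlgebra (Cx R) Cx.conj A) (ω : A →ₗ[Cx R] Cx R)

theorem gns_comb (x y : A) (l m : Cx R) :
    ω (sa.star (l • x + m • y) * (l • x + m • y)) =
      Cx.conj l * l * ω (sa.star x * x) + Cx.conj l * m * ω (sa.star x * y)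
      + Cx.conj m * l * ω (sa.star y * x) + Cx.conj m * m * ω (sa.star y * y) := by
  rw [sa.star_add, sa.star_smul, sa.star_smul]
  have h : (Cx.conj l • sa.star x + Cx.conj m • sa.star y) * (l • x + m • y)
      = (Cx.conj l * l) • (sa.star x * x) + (Cx.conj l * m) • (sa.star x * y)
        + (Cx.conj m * l) • (sa.star y * x) + (Cx.conj m * m) • (sa.star y * y) := by
    simp only [add_mul, mul_add, smul_mul_assoc, mul_smul_comm, smul_smul]
    module
  rw [h]
  simp [smul_eq_mul]

theorem gns_herm (hω : sa.IsPositive (CxNonneg P) ω) (x y : A) :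
    ω (sa.star x * y) = Cx.conj (ω (sa.star y * x)) := by
  have hx := (hω x).1
  have hy := (hω y).1
  have e1 := (hω ((1 : Cx R) • x + (1 : Cx R) • y)).1
  rw [gns_comb] at e1
  have e2 := (hω ((1 : Cx R) • x + (Cx.I : Cx R) • y)).1
  rw [gns_comb] at e2
  simp only [Cx.conj_one, one_mul, mul_one, Cx.add_im, Cx.mul_im, Cx.conj_re, Cx.conj_im,
    Cx.I_re, Cx.I_im, hx, hy] at e1 e2
  refine Cx.ext ?_ ?_ <;> simp only [Cx.conj_re, Cx.conj_im]
  · linear_combination e2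
  · linear_combination e1

theorem gns_key (hP : PosCone R P) (hω : sa.IsPositive (CxNonneg P) ω)
    {y : A} (hy : ω (sa.star y * y) = 0) (x : A) : ω (sa.star x * y) = 0 := by
  by_contra hz
  have hw : ω (sa.star y * x) = Cx.conj (ω (sa.star x * y)) := gns_herm sa ω hω y x
  have eA := (hω (ω (sa.star x * y) • x + (-(ω (sa.star x * x))) • y))
  rw [gns_comb] at eA
  have eB := (hω ((1 : Cx R) • x + (-(Cx.conj (ω (sa.star x * y)))) • y))
  rw [gns_comb] at eB
  set z := ω (sa.star x * y) with hzdef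
  set a := ω (sa.star x * x) with hadef
  have ha := hω x
  rw [← hadef] at ha
  have haim : a.im = 0 := ha.1
  have hca : Cx.conj a = a := Cx.ext rfl (by simp [haim])
  have hns : (z * Cx.conj z).re ∈ P := normSq_re_mem hP hz
  have hnn : z * Cx.conj z ∈ CxNonneg P := ⟨normSq_im z, Or.inr hns⟩
  -- Step A : a * |z|² = 0 hence a = 0
  have eA' : -(a * (z * Cx.conj z)) ∈ CxNonneg P := by
    have : Cx.conj z * z * a + Cx.conj z * -a * z + Cx.conj (-a) * z * Cx.conj z
        + Cx.conj (-a) * -a * ω (sa.star y * y) = -(a * (z * Cx.conj z)) := by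
      rw [Cx.conj_neg, hca, hy]; ring
    rwa [hw, this] at eA
  have h0 : a * (z * Cx.conj z) = 0 :=
    nonneg_antisymm hP (nonneg_mul hP ha hnn) eA'
  have ha0 : a = 0 := by
    rcases ha.2 with h | h
    · exact Cx.ext h haim
    · exfalso
      have hm : (a * (z * Cx.conj z)).re ∈ P := by
        have := hP.mul_mem _ _ h hns
        simpa [haim, normSq_im] using this
      rw [h0] at hm
      exact hP.zero_not_mem (by simpa using hm)
  -- Step B : with a = 0 conclude |z|² = 0, contradiction
  have eB' : -(z * Cx.conj z + z * Cx.conj z) ∈ CxNonneg P := by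
    have : Cx.conj 1 * 1 * a + Cx.conj 1 * -(Cx.conj z) * z
        + Cx.conj (-(Cx.conj z)) * 1 * ω (sa.star y * x)
        + Cx.conj (-(Cx.conj z)) * -(Cx.conj z) * ω (sa.star y * y)
        = -(z * Cx.conj z + z * Cx.conj z) := by
      rw [hw, hy, ha0, Cx.conj_neg, Cx.conj_one]
      have : Cx.conj (Cx.conj z) = z := by ext <;> simp
      rw [this]; ring
    rwa [this] at eB
  have hpm : (z * Cx.conj z).re + (z * Cx.conj z).re ∈ P := hP.add_mem _ _ hns hns
  rcases eB'.2 with h | h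
  · have : (z * Cx.conj z).re + (z * Cx.conj z).re = 0 := by
      have h' : -((z * Cx.conj z).re + (z * Cx.conj z).re) = 0 := by simpa using h
      exact neg_eq_zero.mp h'
    exact hP.zero_not_mem (this ▸ hpm)
  · exact hP.not_neg_mem _ hpm (by simpa using h)

end GNSAux

set_option maxHeartbeats 1000000 in
/-- GNS construction. For a positive linear functional `ω` on a
unital `*`-algebra over `C = R[i]` with Gel'fand ideal `J`, the quotient
`H_ω = A/J` carries a well-defined inner product `⟨ψ_b, ψ_c⟩ = ω(b*c)` making
it a pre-Hilbert space over `C`, and left multiplication `π_ω(a)ψ_b = ψ_{ab}`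
defines a `*`-representation of `A` on `H_ω`: each `π_ω(a)` is adjointable
with adjoint `π_ω(a*)`, and `π_ω` is an algebra homomorphism. -/
theorem gns_construction (R : Type) [CommRing R] [Nontrivial R] (P : Set R)
    (hP : PosCone R P)
    (A : Type) [Ring A] [Algebra (Cx R) A]
    (sa : StarAlgebra (Cx R) Cx.conj A)
    (ω : A →ₗ[Cx R] Cx R) (hω : sa.IsPositive (CxNonneg P) ω)
    (J : Submodule (Cx R) A) (hJ : ∀ a : A, a ∈ J ↔ ω (sa.star a * a) = 0) :
    ∃ hp : PreHilbert (Cx R) Cx.conj (CxPos P) (A ⧸ J),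
      (∀ b c : A, hp.inner (Submodule.Quotient.mk b) (Submodule.Quotient.mk c)
          = ω (sa.star b * c)) ∧
      ∃ π : A →ₗ[Cx R] ((A ⧸ J) →ₗ[Cx R] (A ⧸ J)),
        (∀ a b : A, π a (Submodule.Quotient.mk b) = Submodule.Quotient.mk (a * b)) ∧
        (∀ a b : A, π (a * b) = (π a).comp (π b)) ∧
        (π 1 = LinearMap.id) ∧
        (∀ (a : A) (x y : A ⧸ J), hp.inner (π a x) y = hp.inner x (π (sa.star a) y)) := by
  classical
  have herm : ∀ x y : A, ω (sa.star x * y) = Cx.conj (ω (sa.star y * x)) := gns_herm sa ω hω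
  have vr : ∀ c ∈ J, ∀ x : A, ω (sa.star x * c) = 0 := fun c hc x =>
    gns_key sa ω hP hω ((hJ c).1 hc) x
  have vl : ∀ c ∈ J, ∀ x : A, ω (sa.star c * x) = 0 := fun c hc x => by
    rw [herm c x, vr c hc x, Cx.conj_zero]
  have star_sub : ∀ x y : A, sa.star (x - y) = sa.star x - sa.star y := by
    have h0 : sa.star (0 : A) = 0 := by
      have := sa.star_add 0 0
      simpa using this.symm
    have hneg : ∀ x : A, sa.star (-x) = -sa.star x := by
      intro x
      have := sa.star_add x (-x)
      rw [add_neg_cancel, h0] at this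
      exact (neg_eq_of_add_eq_zero_right this.symm).symm
    intro x y
    rw [sub_eq_add_neg, sa.star_add, hneg, sub_eq_add_neg]
  -- well-definedness of the inner product
  have wd : ∀ b₁ c₁ b₂ c₂ : A, Submodule.quotientRel J b₁ b₂ → Submodule.quotientRel J c₁ c₂ →
      ω (sa.star b₁ * c₁) = ω (sa.star b₂ * c₂) := by
    intro b₁ c₁ b₂ c₂ hb hc
    have hb' : b₁ - b₂ ∈ J := (Submodule.quotientRel_def J).mp hb
    have hc' : c₁ - c₂ ∈ J := (Submodule.quotientRel_def J).mp hc
    have expand : ω (sa.star b₁ * c₁)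
        = ω (sa.star b₁ * (c₁ - c₂)) + ω (sa.star (b₁ - b₂) * c₂) + ω (sa.star b₂ * c₂) := by
      rw [star_sub, mul_sub, sub_mul, map_sub, map_sub]
      ring
    rw [expand, vr _ hc' b₁, vl _ hb' c₂]
    ring
  set inn : (A ⧸ J) → (A ⧸ J) → Cx R := fun x y =>
    @Quotient.liftOn₂' A A (Cx R) (Submodule.quotientRel J) (Submodule.quotientRel J) x y
      (fun b c => ω (sa.star b * c)) wd with hinn
  have inn_mk : ∀ b c : A, inn (Submodule.Quotient.mk b) (Submodule.Quotient.mk c)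
      = ω (sa.star b * c) := fun b c => rfl
  -- J is a left ideal
  have hmul : ∀ (a : A), ∀ b ∈ J, a * b ∈ J := by
    intro a b hb
    rw [hJ]
    have : sa.star (a * b) * (a * b) = sa.star b * (sa.star a * (a * b)) := by
      rw [sa.star_mul, mul_assoc]
    rw [this, vl b hb]
  -- the representation
  have hker : ∀ a : A, J ≤ LinearMap.ker ((Submodule.mkQ J).comp (LinearMap.mulLeft (Cx R) a)) := by
    intro a b hb
    simp only [LinearMap.mem_ker, LinearMap.comp_apply, LinearMap.mulLeft_apply,
      Submodule.mkQ_apply, Submodule.Quotient.mk_eq_zero]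
    exact hmul a b hb
  set π0 : A → (A ⧸ J) →ₗ[Cx R] (A ⧸ J) := fun a =>
    Submodule.liftQ J ((Submodule.mkQ J).comp (LinearMap.mulLeft (Cx R) a)) (hker a) with hπ0
  have π0_mk : ∀ a b : A, π0 a (Submodule.Quotient.mk b) = Submodule.Quotient.mk (a * b) := by
    intro a b
    rw [hπ0]
    erw [Submodule.liftQ_apply]
    simp
  refine ⟨⟨inn, ?_, ?_, ?_, ?_⟩, inn_mk, ?_⟩
  · -- inner_add_right
    intro φ ψ χ
    obtain ⟨b, rfl⟩ := Submodule.Quotient.mk_surjective J φ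
    obtain ⟨c, rfl⟩ := Submodule.Quotient.mk_surjective J ψ
    obtain ⟨d, rfl⟩ := Submodule.Quotient.mk_surjective J χ
    rw [← Submodule.Quotient.mk_add, inn_mk, inn_mk, inn_mk, mul_add, map_add]
  · -- inner_smul_right
    intro z φ ψ
    obtain ⟨b, rfl⟩ := Submodule.Quotient.mk_surjective J φ
    obtain ⟨c, rfl⟩ := Submodule.Quotient.mk_surjective J ψ
    rw [← Submodule.Quotient.mk_smul, inn_mk, inn_mk, mul_smul_comm, map_smul, smul_eq_mul]
  · -- inner_conj
    intro φ ψ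
    obtain ⟨b, rfl⟩ := Submodule.Quotient.mk_surjective J φ
    obtain ⟨c, rfl⟩ := Submodule.Quotient.mk_surjective J ψ
    rw [inn_mk, inn_mk, herm]
  · -- inner_pos
    intro φ hφ
    obtain ⟨b, rfl⟩ := Submodule.Quotient.mk_surjective J φ
    rw [inn_mk]
    have hb : b ∉ J := fun h => hφ (Submodule.Quotient.mk_eq_zero J |>.mpr h)
    have hne : ω (sa.star b * b) ≠ 0 := fun h => hb ((hJ b).mpr h)
    obtain ⟨him, hre⟩ := hω b
    refine ⟨him, ?_⟩
    rcases hre with h | h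
    · exact absurd (Cx.ext h him) hne
    · exact h
  · -- the representation
    refine ⟨{ toFun := π0, map_add' := ?_, map_smul' := ?_ }, ?_, ?_, ?_, ?_⟩
    · intro a b
      apply LinearMap.ext
      intro x
      obtain ⟨c, rfl⟩ := Submodule.Quotient.mk_surjective J x
      rw [LinearMap.add_apply, π0_mk, π0_mk, π0_mk, add_mul, Submodule.Quotient.mk_add]
    · intro z a
      apply LinearMap.ext
      intro x
      obtain ⟨c, rfl⟩ := Submodule.Quotient.mk_surjective J x
      rw [RingHom.id_apply, LinearMap.smul_apply, π0_mk, π0_mk, smul_mul_assoc,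
        Submodule.Quotient.mk_smul]
    · -- π a (mk b) = mk (a b)
      intro a b
      exact π0_mk a b
    · -- multiplicative
      intro a b
      apply LinearMap.ext
      intro x
      obtain ⟨c, rfl⟩ := Submodule.Quotient.mk_surjective J x
      show π0 (a * b) (Submodule.Quotient.mk c) = π0 a (π0 b (Submodule.Quotient.mk c))
      rw [π0_mk, π0_mk, π0_mk, mul_assoc]
    · -- unital
      apply LinearMap.ext
      intro x
      obtain ⟨c, rfl⟩ := Submodule.Quotient.mk_surjective J x
      show π0 1 (Submodule.Quotient.mk c) = Submodule.Quotient.mk c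
      rw [π0_mk, one_mul]
    · -- adjoint
      intro a x y
      obtain ⟨b, rfl⟩ := Submodule.Quotient.mk_surjective J x
      obtain ⟨c, rfl⟩ := Submodule.Quotient.mk_surjective J y
      show inn (π0 a (Submodule.Quotient.mk b)) (Submodule.Quotient.mk c)
        = inn (Submodule.Quotient.mk b) (π0 (sa.star a) (Submodule.Quotient.mk c))
      rw [π0_mk, π0_mk, inn_mk, inn_mk, sa.star_mul, mul_assoc]
end

section
/- Let A be a unital *-algebra over C with ℚ ⊆ R, and (A[[λ]],⋆) a Hermitian formal deformation of A. If P₀ ∈ M_n(A) satisfies P₀² = P₀ = P₀*, then P := 1/2 + (P₀ - 1/2) ⋆ (1 + 4(P₀⋆P₀ - P₀))^{-1/2_⋆} is a well-defined element of M_n(A[[λ]]) with P ⋆ P = P = P* and P ≡ P₀ mod λ. In other words, every Hermitian projection deforms to a Hermitian projection of the deformed algebra. -/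
/-- The formal deformation `f ⋆ g = Σ_r λ^r Σ_{i+j+k=r} C_k(f_i, g_j)` of an
algebra `A`, determined by a sequence of bilinear cochains `C_k`. -/
noncomputable def psMul {A : Type} [Ring A] (Cc : ℕ → A → A → A)
    (f g : PowerSeries A) : PowerSeries A :=
  PowerSeries.mk fun n =>
    ∑ p ∈ Finset.HasAntidiagonal.antidiagonal n, ∑ q ∈ Finset.HasAntidiagonal.antidiagonal p.2,
      Cc p.1 (PowerSeries.coeff q.1 f) (PowerSeries.coeff q.2 g)

/-- The coefficientwise extension of a `*`-involution to `A[[λ]]`. -/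
noncomputable def psStar {A : Type} [Ring A] (st : A → A) (f : PowerSeries A) :
    PowerSeries A :=
  PowerSeries.mk fun n => st (PowerSeries.coeff n f)

/-- The `*`-involution of matrices over a `*`-algebra: entrywise star composed
with transposition. -/
def mStar {A : Type} (st : A → A) {m : ℕ} (X : Matrix (Fin m) (Fin m) A) :
    Matrix (Fin m) (Fin m) A :=
  Matrix.of fun i j => st (X j i)

/-- The matrix extension of the deformation cochains: deformed matrix
multiplication. -/
def matC {A : Type} [Ring A] (Cc : ℕ → A → A → A) (m : ℕ) :
    ℕ → Matrix (Fin m) (Fin m) A → Matrix (Fin m) (Fin m) A → Matrix (Fin m) (Fin m) A :=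
  fun k X Y => Matrix.of (fun i j => ∑ l, Cc k (X i l) (Y l j))

/-!
With `x = P₀ ⋆ P₀ - P₀`, which is of order `λ`, the `λ`-adic filtration of `M_n(A⟦λ⟧)` is complete,
so every map raising the order of differences has a unique fixed point. Solving `g = 1 - x g²`
(a Catalan series in `x`) gives `h = x g` with `h² + h = x`; uniqueness of fixed points shows that `h`
commutes with `P₀` and is Hermitian. Then `1 + 2h = (1 + 4x)^{1/2}` is invertible, and
`P = (P₀ + h)(1 + 2h)⁻¹` is a Hermitian idempotent with constant term `P₀`.
-/

section IdempotentFormula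

variable {R : Type*} [Ring R] {u h : R}

lemma commute_add_units_inv (w : Rˣ) (hw : (w : R) = 1 + (h + h)) (huh : Commute u h) :
    Commute (u + h) ↑w⁻¹ := by
  have hc : Commute (u + h) h := huh.add_left (Commute.refl h)
  refine Commute.units_inv_right ?_
  rw [hw]
  exact (Commute.one_right _).add_right (hc.add_right hc)

-- With `2` invertible this is the projection `½ + (u - ½)(1 + 4(u² - u))^{-½}`,
-- as `1 + 2h = (1 + 4(u² - u))^{½}`.
lemma isIdempotentElem_mul_inv (w : Rˣ) (hw : (w : R) = 1 + (h + h))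
    (huh : Commute u h) (hh : h * h + h = u * u - u) : IsIdempotentElem ((u + h) * ↑w⁻¹) := by
  have hsq : (u + h) * (u + h) = (u + h) * w := by
    calc (u + h) * (u + h) = u * u + u * h + h * u + h * h := by noncomm_ring
      _ = u + (u * h + u * h) + h + (h * h + h * h) := by
        rw [← huh.eq, eq_sub_of_add_eq hh]; noncomm_ring
      _ = (u + h) * w := by rw [hw]; noncomm_ring
  calc (u + h) * ↑w⁻¹ * ((u + h) * ↑w⁻¹) = (u + h) * (u + h) * ↑w⁻¹ * ↑w⁻¹ := by
        rw [mul_assoc, ← mul_assoc _ (u + h), ← (commute_add_units_inv w hw huh).eq]; noncomm_ring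
    _ = (u + h) * ↑w⁻¹ := by rw [hsq, mul_assoc (u + h), Units.mul_inv, mul_one]

end IdempotentFormula

structure CompleteFiltration (S : Type*) [Ring S] where
  F : ℕ → AddSubgroup S
  mem_zero : ∀ a, a ∈ F 0
  mul_mem : ∀ {i j : ℕ} {a b : S}, a ∈ F i → b ∈ F j → a * b ∈ F (i + j)
  eq_zero_of_forall_mem : ∀ a, (∀ N, a ∈ F N) → a = 0
  exists_limit : ∀ x : ℕ → S, (∀ k, x (k + 1) - x k ∈ F k) → ∃ y, ∀ k, y - x k ∈ F k

namespace CompleteFiltration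

variable {S : Type*} [Ring S] (𝓕 : CompleteFiltration S)

lemma mul_mem_of_mem_right {a b : S} {N : ℕ} (hb : b ∈ 𝓕.F N) : a * b ∈ 𝓕.F N := by
  simpa using 𝓕.mul_mem (𝓕.mem_zero a) hb

lemma mul_mem_of_mem_left {a b : S} {N : ℕ} (ha : a ∈ 𝓕.F N) : a * b ∈ 𝓕.F N :=
  𝓕.mul_mem ha (𝓕.mem_zero b)

lemma mul_mem_succ_left {a b : S} {N : ℕ} (ha : a ∈ 𝓕.F 1) (hb : b ∈ 𝓕.F N) :
    a * b ∈ 𝓕.F (N + 1) := by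
  simpa [add_comm] using 𝓕.mul_mem ha hb

lemma mul_mem_succ_right {a b : S} {N : ℕ} (ha : a ∈ 𝓕.F N) (hb : b ∈ 𝓕.F 1) :
    a * b ∈ 𝓕.F (N + 1) :=
  𝓕.mul_mem ha hb

def matrix (n : Type*) [Fintype n] [DecidableEq n] : CompleteFiltration (Matrix n n S) where
  F N :=
    { carrier := {X | ∀ i j, X i j ∈ 𝓕.F N}
      add_mem' := fun hX hY i j => add_mem (hX i j) (hY i j)
      zero_mem' := fun _ _ => zero_mem _
      neg_mem' := fun hX i j => neg_mem (hX i j) }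
  mem_zero X i j := 𝓕.mem_zero (X i j)
  mul_mem hX hY i j := sum_mem fun l _ => 𝓕.mul_mem (hX i l) (hY l j)
  eq_zero_of_forall_mem X hX := Matrix.ext fun i j => 𝓕.eq_zero_of_forall_mem _ fun N => hX N i j
  exists_limit x hx := by
    choose y hy using fun i j => 𝓕.exists_limit (fun k => x k i j) fun k => hx k i j
    exact ⟨Matrix.of y, fun k i j => hy i j k⟩

def Contracting (Φ : S → S) : Prop :=
  ∀ N x y, x - y ∈ 𝓕.F N → Φ x - Φ y ∈ 𝓕.F (N + 1)

variable {𝓕}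

lemma Contracting.eq_of_isFixedPt {Φ : S → S} (hΦ : 𝓕.Contracting Φ) {x y : S}
    (hx : Φ x = x) (hy : Φ y = y) : x = y := by
  have hN : ∀ N, x - y ∈ 𝓕.F N := fun N => by
    induction N with
    | zero => exact 𝓕.mem_zero _
    | succ N ih => simpa [hx, hy] using hΦ N x y ih
  exact sub_eq_zero.mp (𝓕.eq_zero_of_forall_mem _ hN)

lemma Contracting.exists_isFixedPt {Φ : S → S} (hΦ : 𝓕.Contracting Φ) : ∃ x, Φ x = x := by
  have hstep : ∀ k, Φ^[k + 1] 0 - Φ^[k] 0 ∈ 𝓕.F k := fun k => by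
    induction k with
    | zero => exact 𝓕.mem_zero _
    | succ k ih => simpa only [Function.iterate_succ_apply'] using hΦ k _ _ ih
  obtain ⟨x, hx⟩ := 𝓕.exists_limit (fun k => Φ^[k] 0) hstep
  refine ⟨x, sub_eq_zero.mp (𝓕.eq_zero_of_forall_mem _ fun N => ?_)⟩
  cases N with
  | zero => exact 𝓕.mem_zero _
  | succ N =>
    have h := sub_mem (hΦ N _ _ (hx N)) (hx (N + 1))
    rw [Function.iterate_succ_apply'] at h
    convert h using 1
    abel

lemma isUnit_one_add {t : S} (ht : t ∈ 𝓕.F 1) : IsUnit (1 + t) := by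
  have hR : 𝓕.Contracting fun y => 1 - t * y := fun N x y hxy => by
    simpa [← mul_sub] using 𝓕.mul_mem_succ_left ht (sub_mem_comm_iff.mp hxy)
  have hL : 𝓕.Contracting fun y => 1 - y * t := fun N x y hxy => by
    simpa [← sub_mul] using 𝓕.mul_mem_succ_right (sub_mem_comm_iff.mp hxy) ht
  obtain ⟨r, hr⟩ := hR.exists_isFixedPt
  obtain ⟨l, hl⟩ := hL.exists_isFixedPt
  have hr' : (1 + t) * r = 1 := by
    calc (1 + t) * r = (1 - t * r) + t * r := by rw [hr]; noncomm_ring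
      _ = 1 := sub_add_cancel _ _
  have hl' : l * (1 + t) = 1 := by
    calc l * (1 + t) = (1 - l * t) + l * t := by rw [hl]; noncomm_ring
      _ = 1 := sub_add_cancel _ _
  exact isUnit_iff_exists.mpr ⟨r, hr', left_inv_eq_right_inv hl' hr' ▸ hl'⟩

lemma contracting_catalan {x : S} (hx : x ∈ 𝓕.F 1) : 𝓕.Contracting fun g => 1 - x * g * g :=
  fun N g g' hgg' => by
    have h := 𝓕.mul_mem_succ_left hx
      (add_mem (𝓕.mul_mem_of_mem_left (a := g' - g) (b := g) (sub_mem_comm_iff.mp hgg'))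
        (𝓕.mul_mem_of_mem_right (a := g') (sub_mem_comm_iff.mp hgg')))
    convert h using 1
    noncomm_ring

section Catalan

variable {x g : S} (hx : x ∈ 𝓕.F 1) (hg : 1 - x * g * g = g)
include hx hg

-- `g = ∑ₖ (-1)ᵏ Catalanₖ xᵏ`; the commutator `[c, g]` solves the contracting equation
-- `d = -x (g d + d g)`, whose only solution is `0`.
lemma commute_of_catalan {c : S} (hc : Commute c x) : Commute c g := by
  have hΨ : 𝓕.Contracting fun d => -(x * (g * d + d * g)) := fun N d d' hdd' => by
    have h := 𝓕.mul_mem_succ_left hx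
      (add_mem (𝓕.mul_mem_of_mem_right (a := g) (sub_mem_comm_iff.mp hdd'))
        (𝓕.mul_mem_of_mem_left (b := g) (sub_mem_comm_iff.mp hdd')))
    convert h using 1
    noncomm_ring
  have hcomm : -(x * (g * (c * g - g * c) + (c * g - g * c) * g)) = c * g - g * c := by
    calc -(x * (g * (c * g - g * c) + (c * g - g * c) * g))
        = -(c * x) * g * g + x * g * g * c := by rw [hc.eq]; noncomm_ring
      _ = c * (1 - x * g * g) - (1 - x * g * g) * c := by noncomm_ring
      _ = c * g - g * c := by rw [hg]
  exact sub_eq_zero.mp (hΨ.eq_of_isFixedPt hcomm (by simp))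

lemma catalan_mul_add_self : x * g * (x * g) + x * g = x := by
  have hxg := commute_of_catalan hx hg (Commute.refl x)
  calc x * g * (x * g) + x * g = x * (g * x) * g + x * g := by noncomm_ring
    _ = x * (1 - (1 - x * g * g)) + x * g := by rw [← hxg.eq]; noncomm_ring
    _ = x := by rw [hg]; noncomm_ring

lemma isSelfAdjoint_of_catalan [StarRing S] (hsa : IsSelfAdjoint x) : IsSelfAdjoint g := by
  have hxg : Commute x (star g) := by
    simpa [hsa.star_eq] using (commute_of_catalan hx hg (Commute.refl x)).star_star
  have hstar : 1 - x * star g * star g = star g := by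
    calc 1 - x * star g * star g = 1 - star g * (star g * x) := by
          rw [hxg.eq, mul_assoc, hxg.eq]
      _ = star (1 - x * g * g) := by simp [hsa.star_eq]
      _ = star g := by rw [hg]
  exact (contracting_catalan hx).eq_of_isFixedPt hstar hg

end Catalan

theorem exists_isIdempotentElem_isSelfAdjoint [StarRing S] {u : S} (hu : u * u - u ∈ 𝓕.F 1)
    (hsa : IsSelfAdjoint u) : ∃ P, IsIdempotentElem P ∧ IsSelfAdjoint P ∧ P - u ∈ 𝓕.F 1 := by
  set x := u * u - u
  obtain ⟨g, hg⟩ := (contracting_catalan hu).exists_isFixedPt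
  have hxsa : IsSelfAdjoint x := by simp [x, isSelfAdjoint_iff, hsa.star_eq]
  have hux : Commute u x := ((Commute.refl u).mul_right (Commute.refl u)).sub_right (Commute.refl u)
  set h := x * g
  have hh : h ∈ 𝓕.F 1 := 𝓕.mul_mem_of_mem_left hu
  have huh : Commute u h := hux.mul_right (commute_of_catalan hu hg hux)
  have hhsa : IsSelfAdjoint h := (hxsa.commute_iff (isSelfAdjoint_of_catalan hu hg hxsa)).mp
    (commute_of_catalan hu hg (Commute.refl x))
  obtain ⟨w, hw⟩ := 𝓕.isUnit_one_add (add_mem hh hh)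
  have hwsa : IsSelfAdjoint (↑w⁻¹ : S) := by
    rw [← Ring.inverse_unit, hw]
    exact ((IsSelfAdjoint.one S).add (hhsa.add hhsa)).ringInverse
  refine ⟨(u + h) * ↑w⁻¹, isIdempotentElem_mul_inv w hw huh (catalan_mul_add_self hu hg),
    ((hsa.add hhsa).commute_iff hwsa).mp (commute_add_units_inv w hw huh), ?_⟩
  have hPu : (u + h) * ↑w⁻¹ - u = (h - u * (h + h)) * ↑w⁻¹ := by
    calc (u + h) * ↑w⁻¹ - u = (u + h) * ↑w⁻¹ - u * ↑w * ↑w⁻¹ := by rw [Units.mul_inv_cancel_right]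
      _ = (h - u * (h + h)) * ↑w⁻¹ := by rw [hw]; noncomm_ring
  rw [hPu]
  exact 𝓕.mul_mem_of_mem_left (sub_mem hh (𝓕.mul_mem_of_mem_right (add_mem hh hh)))

end CompleteFiltration

structure HermitianDeformation (A : Type) [Ring A] where
  C : ℕ → A → A → A
  involution : A → A
  C_zero : ∀ a b, C 0 a b = a * b
  C_add_left : ∀ k a a' b, C k (a + a') b = C k a b + C k a' b
  C_add_right : ∀ k a b b', C k a (b + b') = C k a b + C k a b'
  mul_assoc : ∀ f g h, psMul C (psMul C f g) h = psMul C f (psMul C g h)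
  one_mul : ∀ f, psMul C 1 f = f
  mul_one : ∀ f, psMul C f 1 = f
  involution_add : ∀ a b, involution (a + b) = involution a + involution b
  involution_involution : ∀ a, involution (involution a) = a
  psStar_psMul : ∀ f g,
    psStar involution (psMul C f g) = psMul C (psStar involution g) (psStar involution f)

section PowerSeries

variable {A : Type} [Ring A] {C : ℕ → A → A → A}

lemma psMul_add (hC : ∀ k a b b', C k a (b + b') = C k a b + C k a b') (f g g' : PowerSeries A) :
    psMul C f (g + g') = psMul C f g + psMul C f g' := by
  ext n; simp [psMul, hC, Finset.sum_add_distrib]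

lemma add_psMul (hC : ∀ k a a' b, C k (a + a') b = C k a b + C k a' b)
    (f f' g : PowerSeries A) : psMul C (f + f') g = psMul C f g + psMul C f' g := by
  ext n; simp [psMul, hC, Finset.sum_add_distrib]

lemma zero_psMul (hC : ∀ k b, C k 0 b = 0) (g : PowerSeries A) : psMul C 0 g = 0 := by
  ext n; simp [psMul, hC]

lemma psMul_zero (hC : ∀ k a, C k a 0 = 0) (f : PowerSeries A) : psMul C f 0 = 0 := by
  ext n; simp [psMul, hC]

lemma psStar_add {st : A → A} (h : ∀ a b, st (a + b) = st a + st b) (f g : PowerSeries A) :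
    psStar st (f + g) = psStar st f + psStar st g := by
  ext n; simp [psStar, h]

lemma psStar_psStar {st : A → A} (h : ∀ a, st (st a) = a) (f : PowerSeries A) :
    psStar st (psStar st f) = f := by
  ext n; simp [psStar, h]

end PowerSeries

namespace HermitianDeformation

variable {A : Type} [Ring A] (D : HermitianDeformation A)

-- A type synonym, so that `A⟦λ⟧` can carry the deformed product instead of the usual one.
def Deformed (_ : HermitianDeformation A) : Type := PowerSeries A

instance : AddCommGroup D.Deformed := inferInstanceAs (AddCommGroup (PowerSeries A))

noncomputable def coeff (n : ℕ) : D.Deformed →+ A := (PowerSeries.coeff (R := A) n).toAddMonoidHom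

noncomputable def ofCoeff (a : ℕ → A) : D.Deformed := PowerSeries.mk a

noncomputable def const (a : A) : D.Deformed := PowerSeries.C a

@[ext]
lemma ext {f g : D.Deformed} (h : ∀ n, D.coeff n f = D.coeff n g) : f = g := PowerSeries.ext h

lemma coeff_ofCoeff (n : ℕ) (a : ℕ → A) : D.coeff n (D.ofCoeff a) = a n := PowerSeries.coeff_mk n a

lemma C_zero_left (k : ℕ) (b : A) : D.C k 0 b = 0 := by
  simpa using D.C_add_left k 0 0 b

lemma C_zero_right (k : ℕ) (a : A) : D.C k a 0 = 0 := by
  simpa using D.C_add_right k a 0 0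

noncomputable instance : Ring D.Deformed :=
  { (inferInstance : AddCommGroup D.Deformed) with
    mul := psMul D.C
    one := (1 : PowerSeries A)
    mul_assoc := D.mul_assoc
    one_mul := D.one_mul
    mul_one := D.mul_one
    left_distrib := psMul_add D.C_add_right
    right_distrib := add_psMul D.C_add_left
    zero_mul := zero_psMul D.C_zero_left
    mul_zero := psMul_zero D.C_zero_right }

lemma coeff_mul (n : ℕ) (f g : D.Deformed) :
    D.coeff n (f * g) = ∑ p ∈ Finset.HasAntidiagonal.antidiagonal n,
      ∑ q ∈ Finset.HasAntidiagonal.antidiagonal p.2, D.C p.1 (D.coeff q.1 f) (D.coeff q.2 g) := by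
  show PowerSeries.coeff n (psMul D.C f g) = _
  exact PowerSeries.coeff_mk _ _

lemma coeff_one (n : ℕ) : D.coeff n 1 = if n = 0 then 1 else 0 := PowerSeries.coeff_one n

lemma coeff_const (n : ℕ) (a : A) : D.coeff n (D.const a) = if n = 0 then a else 0 :=
  PowerSeries.coeff_C n a

noncomputable instance : StarRing D.Deformed where
  star := psStar D.involution
  star_involutive := psStar_psStar D.involution_involution
  star_mul := D.psStar_psMul
  star_add := psStar_add D.involution_add

lemma coeff_star (n : ℕ) (f : D.Deformed) : D.coeff n (star f) = D.involution (D.coeff n f) := by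
  show PowerSeries.coeff n (psStar D.involution f) = _
  exact PowerSeries.coeff_mk _ _

lemma involution_zero : D.involution 0 = 0 := by simpa using D.involution_add 0 0

lemma star_const (a : A) : star (D.const a) = D.const (D.involution a) := by
  ext n
  rw [coeff_star, coeff_const, coeff_const]
  split_ifs <;> simp [involution_zero]

noncomputable def constantCoeff : D.Deformed →+* A where
  toFun := D.coeff 0
  map_one' := by simp [coeff_one]
  map_mul' f g := by simp [coeff_mul, D.C_zero]
  map_zero' := map_zero _
  map_add' := map_add _

lemma constantCoeff_const (a : A) : D.constantCoeff (D.const a) = a := by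
  simp [constantCoeff, coeff_const]

noncomputable def filtration : CompleteFiltration D.Deformed where
  F N :=
    { carrier := {f | ∀ n < N, D.coeff n f = 0}
      add_mem' := fun hf hg n hn => by rw [map_add, hf n hn, hg n hn, add_zero]
      zero_mem' := fun n _ => map_zero _
      neg_mem' := fun hf n hn => by rw [map_neg, hf n hn, neg_zero] }
  mem_zero _ _ hn := absurd hn (Nat.not_lt_zero _)
  mul_mem {i j f g} hf hg n hn := by
    rw [coeff_mul]
    refine Finset.sum_eq_zero fun p hp => Finset.sum_eq_zero fun q hq => ?_
    rw [Finset.HasAntidiagonal.mem_antidiagonal] at hp hq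
    rcases lt_or_ge q.1 i with hi | hi
    · rw [hf q.1 hi, D.C_zero_left]
    · rw [hg q.2 (by omega), D.C_zero_right]
  eq_zero_of_forall_mem f hf := D.ext fun n => (hf (n + 1) n n.lt_succ_self).trans (map_zero _).symm
  exists_limit x hx := by
    have hstable : ∀ n k, n < k → D.coeff n (x k) = D.coeff n (x (n + 1)) := fun n k hk => by
      induction k, hk using Nat.le_induction with
      | base => rfl
      | succ k hk ih => rw [← ih, ← sub_eq_zero, ← map_sub, hx k n hk]
    refine ⟨D.ofCoeff fun n => D.coeff n (x (n + 1)), fun k n hn => ?_⟩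
    rw [map_sub, hstable n k hn, coeff_ofCoeff, sub_self]

lemma sub_mem_filtration_matrix_one_iff {n : Type*} [Fintype n] [DecidableEq n]
    {X Y : Matrix n n D.Deformed} :
    X - Y ∈ (D.filtration.matrix n).F 1 ↔ X.map D.constantCoeff = Y.map D.constantCoeff := by
  rw [← sub_eq_zero, ← Matrix.map_sub _ (map_sub D.constantCoeff)]
  exact ⟨fun h => Matrix.ext fun i j => h i j 0 zero_lt_one,
    fun h i j _ hk => Nat.lt_one_iff.mp hk ▸ congrFun (congrFun h i) j⟩

lemma map_constantCoeff_map_const {n : Type*} (Q : Matrix n n A) :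
    (Q.map D.const).map D.constantCoeff = Q := by
  ext i j; exact D.constantCoeff_const (Q i j)

section MatrixPowerSeries

variable {m : ℕ}

noncomputable def toPowerSeries (X : Matrix (Fin m) (Fin m) D.Deformed) :
    PowerSeries (Matrix (Fin m) (Fin m) A) :=
  PowerSeries.mk fun n => X.map (D.coeff n)

lemma psMul_toPowerSeries (X Y : Matrix (Fin m) (Fin m) D.Deformed) :
    psMul (matC D.C m) (D.toPowerSeries X) (D.toPowerSeries Y) = D.toPowerSeries (X * Y) := by
  ext n i j
  simp only [psMul, toPowerSeries, PowerSeries.coeff_mk, matC, Matrix.sum_apply, Matrix.of_apply,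
    Matrix.map_apply, Matrix.mul_apply, map_sum, coeff_mul]
  rw [Finset.sum_comm]
  exact Finset.sum_congr rfl fun p _ => Finset.sum_comm

lemma psStar_toPowerSeries (X : Matrix (Fin m) (Fin m) D.Deformed) :
    psStar (mStar D.involution) (D.toPowerSeries X) = D.toPowerSeries (star X) := by
  ext n i j
  simp [psStar, mStar, toPowerSeries, coeff_star]

lemma coeff_zero_toPowerSeries (X : Matrix (Fin m) (Fin m) D.Deformed) :
    PowerSeries.coeff 0 (D.toPowerSeries X) = X.map D.constantCoeff :=
  PowerSeries.coeff_mk _ _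

lemma star_map_const (Q : Matrix (Fin m) (Fin m) A) :
    star (Q.map D.const) = (mStar D.involution Q).map D.const := by
  ext i j
  simp [mStar, star_const]

end MatrixPowerSeries

end HermitianDeformation

theorem hermitian_projection_deforms_general (K : Type) [CommRing K] (conjK : K → K)
    (A : Type) [Ring A] [Algebra K A] (sa : StarAlgebra K conjK A)
    (Cc : ℕ → A → A → A)
    (hC0 : ∀ a b : A, Cc 0 a b = a * b)
    (hCaddl : ∀ (k : ℕ) (a a' b : A), Cc k (a + a') b = Cc k a b + Cc k a' b)
    (hCaddr : ∀ (k : ℕ) (a b b' : A), Cc k a (b + b') = Cc k a b + Cc k a b')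
    (hassoc : ∀ f g h : PowerSeries A,
      psMul Cc (psMul Cc f g) h = psMul Cc f (psMul Cc g h))
    (honel : ∀ f : PowerSeries A, psMul Cc 1 f = f)
    (honer : ∀ f : PowerSeries A, psMul Cc f 1 = f)
    (hherm : ∀ f g : PowerSeries A,
      psStar sa.star (psMul Cc f g)
        = psMul Cc (psStar sa.star g) (psStar sa.star f))
    (m : ℕ) (P₀ : Matrix (Fin m) (Fin m) A)
    (hProj : P₀ * P₀ = P₀) (hHerm : mStar sa.star P₀ = P₀) :
    ∃ P : PowerSeries (Matrix (Fin m) (Fin m) A),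
      PowerSeries.coeff 0 P = P₀ ∧
      psMul (matC Cc m) P P = P ∧
      psStar (mStar sa.star) P = P := by
  let D : HermitianDeformation A :=
    ⟨Cc, sa.star, hC0, hCaddl, hCaddr, hassoc, honel, honer, sa.star_add, sa.star_star, hherm⟩
  let 𝓕 := D.filtration.matrix (Fin m)
  have hu : P₀.map D.const * P₀.map D.const - P₀.map D.const ∈ 𝓕.F 1 := by
    rw [D.sub_mem_filtration_matrix_one_iff, Matrix.map_mul, D.map_constantCoeff_map_const, hProj]
  have husa : IsSelfAdjoint (P₀.map D.const) :=
    (D.star_map_const P₀).trans (congrArg (·.map D.const) hHerm)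
  obtain ⟨P, hP, hPsa, hPu⟩ := 𝓕.exists_isIdempotentElem_isSelfAdjoint hu husa
  refine ⟨D.toPowerSeries P, ?_, (D.psMul_toPowerSeries P P).trans (congrArg _ hP.eq),
    (D.psStar_toPowerSeries P).trans (congrArg _ hPsa.star_eq)⟩
  rw [D.coeff_zero_toPowerSeries, D.sub_mem_filtration_matrix_one_iff.mp hPu,
    D.map_constantCoeff_map_const]

/-- let `A` be a unital `*`-algebra over `C` with `ℚ ⊆ R`
(encoded: the positive integers are invertible scalars), and let `⋆` (given by
cochains `Cc`) be a Hermitian formal deformation of `A`. If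
`P₀ ∈ M_n(A)` satisfies `P₀² = P₀ = P₀*`, then (via the formula
`P = 1/2 + (P₀ - 1/2) ⋆ (1 + 4(P₀ ⋆ P₀ - P₀))^{-1/2_⋆}`) there is a
well-defined `P ∈ M_n(A[[λ]])` with `P ⋆ P = P = P*` and `P ≡ P₀ mod λ`:
every Hermitian projection deforms to a Hermitian projection of the deformed
algebra. -/
theorem hermitian_projection_deforms (K : Type) [CommRing K] (conjK : K → K)
    (hQ : ∀ n : ℕ, n ≠ 0 → IsUnit (n : K))
    (A : Type) [Ring A] [Algebra K A] (sa : StarAlgebra K conjK A)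
    (Cc : ℕ → A → A → A)
    (hC0 : ∀ a b : A, Cc 0 a b = a * b)
    (hCaddl : ∀ (k : ℕ) (a a' b : A), Cc k (a + a') b = Cc k a b + Cc k a' b)
    (hCaddr : ∀ (k : ℕ) (a b b' : A), Cc k a (b + b') = Cc k a b + Cc k a b')
    (hCsmull : ∀ (k : ℕ) (z : K) (a b : A), Cc k (z • a) b = z • Cc k a b)
    (hCsmulr : ∀ (k : ℕ) (z : K) (a b : A), Cc k a (z • b) = z • Cc k a b)
    (hassoc : ∀ f g h : PowerSeries A,
      psMul Cc (psMul Cc f g) h = psMul Cc f (psMul Cc g h))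
    (honel : ∀ f : PowerSeries A, psMul Cc 1 f = f)
    (honer : ∀ f : PowerSeries A, psMul Cc f 1 = f)
    (hherm : ∀ f g : PowerSeries A,
      psStar sa.star (psMul Cc f g)
        = psMul Cc (psStar sa.star g) (psStar sa.star f))
    (m : ℕ) (P₀ : Matrix (Fin m) (Fin m) A)
    (hProj : P₀ * P₀ = P₀) (hHerm : mStar sa.star P₀ = P₀) :
    ∃ P : PowerSeries (Matrix (Fin m) (Fin m) A),
      PowerSeries.coeff 0 P = P₀ ∧
      psMul (matC Cc m) P P = P ∧
      psStar (mStar sa.star) P = P :=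
  hermitian_projection_deforms_general K conjK A sa Cc hC0 hCaddl hCaddr hassoc honel honer hherm m
    P₀ hProj hHerm
end
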